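/- Let Y^t be the stationary Markov chain on state space {−2, 0, 2} with transition matrix P as in the uniform-distributions example (parameter δ ∈ (0,1/2)) and stationary distribution ((1−2δ)/2, 2δ, (1−2δ)/2). Then E[Y^0] = 0 and E[Y^0 Y^t] = 4(1−2δ)(1−2δ)^t for all t ≥ 0; consequently Var(Y^0) + 2Σ_{t≥1} Cov(Y^0, Y^{νt}) = 4(1−2δ) + 8(1−2δ)^{ν+1}/(1 − (1−2δ)^ν) for any integer ν ≥ 1. -/
import Mathlib


open Finset

noncomputable def threeStateP (δ : ℝ) : Matrix (Fin 3) (Fin 3) ℝ :=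
  !![1 - 2 * δ, 2 * δ, 0;
     (1 - 2 * δ) / 2, 2 * δ, (1 - 2 * δ) / 2;
     0, 2 * δ, 1 - 2 * δ]

/-- Stationary distribution of the three-state chain. -/
noncomputable def statDist (δ : ℝ) : Fin 3 → ℝ := ![(1 - 2 * δ) / 2, 2 * δ, (1 - 2 * δ) / 2]

/-- Values of the observable Y on the three states. -/
def Yval : Fin 3 → ℝ := ![-2, 0, 2]

lemma eigY (δ : ℝ) (k : Fin 3) :
    ∑ j, threeStateP δ k j * Yval j = (1 - 2 * δ) * Yval k := by
  fin_cases k <;> simp [threeStateP, Yval, Fin.sum_univ_three] <;> ring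

lemma eigY_pow (δ : ℝ) (t : ℕ) (i : Fin 3) :
    ∑ j, ((threeStateP δ) ^ t) i j * Yval j = (1 - 2 * δ) ^ t * Yval i := by
  induction t with
  | zero => simp [Matrix.one_apply, Fin.sum_univ_three]
  | succ t ih =>
      rw [pow_succ]
      have : ∑ j, ((threeStateP δ) ^ t * threeStateP δ) i j * Yval j
          = ∑ k, ((threeStateP δ) ^ t) i k * ∑ j, threeStateP δ k j * Yval j := by
        simp only [Matrix.mul_apply, Finset.sum_mul, Finset.mul_sum, mul_assoc]
        rw [Finset.sum_comm]
      rw [this]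
      simp only [eigY]
      have : ∑ k, ((threeStateP δ) ^ t) i k * ((1 - 2 * δ) * Yval k)
          = (1 - 2 * δ) * ∑ k, ((threeStateP δ) ^ t) i k * Yval k := by
        rw [Finset.mul_sum]; congr 1; ext k; ring
      rw [this, ih, pow_succ]; ring

lemma autocov (δ : ℝ) (t : ℕ) :
    (∑ i, ∑ j, statDist δ i * ((threeStateP δ) ^ t) i j * Yval i * Yval j) =
      4 * (1 - 2 * δ) * (1 - 2 * δ) ^ t := by
  have h : ∀ i : Fin 3, ∑ j, statDist δ i * ((threeStateP δ) ^ t) i j * Yval i * Yval j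
      = statDist δ i * Yval i * ((1 - 2 * δ) ^ t * Yval i) := by
    intro i
    rw [← eigY_pow δ t i, Finset.mul_sum]
    congr 1; ext j; ring
  simp only [h]
  simp [statDist, Yval, Fin.sum_univ_three]
  ring

theorem integrated_autocovariance (δ : ℝ) (hδ : δ ∈ Set.Ioo (0 : ℝ) (1 / 2)) :
    (∑ i, statDist δ i * Yval i) = 0 ∧
    (∀ t : ℕ,
      (∑ i, ∑ j, statDist δ i * ((threeStateP δ) ^ t) i j * Yval i * Yval j) =
        4 * (1 - 2 * δ) * (1 - 2 * δ) ^ t) ∧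
    (∀ ν : ℕ, 1 ≤ ν →
      (∑ i, statDist δ i * Yval i ^ 2) +
        2 * ∑' t : ℕ,
          (∑ i, ∑ j, statDist δ i * ((threeStateP δ) ^ (ν * (t + 1))) i j * Yval i * Yval j) =
      4 * (1 - 2 * δ) + 8 * (1 - 2 * δ) ^ (ν + 1) / (1 - (1 - 2 * δ) ^ ν)) := by
  obtain ⟨h1, h2⟩ := hδ
  set r : ℝ := 1 - 2 * δ with hr
  have hr0 : 0 < r := by simp [hr]; linarith
  have hr1 : r < 1 := by simp [hr]; linarith
  refine ⟨by simp [statDist, Yval, Fin.sum_univ_three], autocov δ, ?_⟩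
  intro ν hν
  have hrn0 : 0 < r ^ ν := pow_pos hr0 ν
  have hrn1 : r ^ ν < 1 := pow_lt_one₀ hr0.le hr1 (by omega)
  have hsum : ∑' t : ℕ,
      (∑ i, ∑ j, statDist δ i * ((threeStateP δ) ^ (ν * (t + 1))) i j * Yval i * Yval j)
      = 4 * r * (r ^ ν / (1 - r ^ ν)) := by
    have heq : ∀ t : ℕ,
        (∑ i, ∑ j, statDist δ i * ((threeStateP δ) ^ (ν * (t + 1))) i j * Yval i * Yval j)
        = (4 * r * r ^ ν) * (r ^ ν) ^ t := by
      intro t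
      rw [autocov δ (ν * (t + 1))]
      rw [pow_mul]
      ring
    rw [tsum_congr heq, tsum_mul_left, tsum_geometric_of_lt_one hrn0.le hrn1]
    field_simp
  rw [hsum]
  have hvar : (∑ i, statDist δ i * Yval i ^ 2) = 4 * r := by
    simp [statDist, Yval, Fin.sum_univ_three, hr]; ring
  rw [hvar]
  have hne : 1 - r ^ ν ≠ 0 := by linarith
  field_simp
  ring
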